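/- Let d ≥ 2 and ε ∈ (0, 1/2]. Then the inverse minimal dispersion on the torus satisfies Ñ(ε,d) ≤ 24e · (2d ln(2d) + ln(e/ε)) / ε. -/

import Mathlib

open Finset

/-- The `i`-th factor of a periodic axis-parallel box on the torus `[0,1]^d`,
determined by endpoints `a, b ∈ [0,1]`. -/
noncomputable def perInterval (a b : ℝ) : Set ℝ :=
  if a < b then Set.Ioo a b else Set.Icc 0 1 \ Set.Icc b a

/-- Volume of a periodic box. -/
noncomputable def perVol (d : ℕ) (a b : Fin d → ℝ) : ℝ :=
  ∏ i, (if a i < b i then b i - a i else 1 - (a i - b i))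

/-- Periodic dispersion of a finite point set `P ⊆ [0,1]^d`. -/
noncomputable def perDisp (d : ℕ) (P : Finset (Fin d → ℝ)) : ℝ :=
  sSup {v : ℝ | ∃ a b : Fin d → ℝ,
    (∀ i, a i ∈ Set.Icc (0:ℝ) 1 ∧ b i ∈ Set.Icc (0:ℝ) 1) ∧
    v = perVol d a b ∧
    ∀ x ∈ P, x ∉ Set.univ.pi fun i => perInterval (a i) (b i)}

/-- Minimal periodic dispersion over `n`-point subsets of the cube. -/
noncomputable def perDispStar (d n : ℕ) : ℝ :=
  sInf {v : ℝ | ∃ P : Finset (Fin d → ℝ),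
    (P : Set (Fin d → ℝ)) ⊆ (Set.univ.pi fun _ => Set.Icc (0:ℝ) 1) ∧
    P.card = n ∧ v = perDisp d P}

/-- Inverse of the minimal periodic dispersion. -/
noncomputable def perNinv (ε : ℝ) (d : ℕ) : ℕ :=
  sInf {n : ℕ | perDispStar d n ≤ ε}

/-!
Put `θ = 1/(4d)`. At level `k` consider the periodic boxes whose sides are arcs of length
`(1 - θ)^k` starting on the grid `θ (1 - θ)^k ℕ`. A periodic box of volume `> ε` contains such
a box of volume at least `ε/2`: in each coordinate take the first level at which an arc plus one
grid step fits into the side; this loses at most a factor `1 - 2θ` per coordinate, and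
`(1 - 2θ)^d ≥ 1/2` by Bernoulli. Only levels `k ≤ 4d log(2/ε)` occur, so there are at most
`(4d log(2/ε) + 1)^d (8d)^d (2/ε)` such boxes. `n` independent uniform points all miss a fixed
box of volume `≥ ε/2` with probability at most `(1 - ε/2)^n`, so by the union bound some `n`
points meet every box of the family as soon as its size times `(1 - ε/2)^n` is below `1`; this
holds for `n = ⌊24e (2d log(2d) + log(e/ε)) / ε⌋`.
-/

open MeasureTheory Set

theorem prod_le_apply_of_mem_Icc {ι : Type*} [Fintype ι] {f : ι → ℝ}
    (hf : ∀ j, f j ∈ Icc (0 : ℝ) 1) (i : ι) : ∏ j, f j ≤ f i := by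
  simpa using prod_le_prod_of_subset_of_le_one (subset_univ {i}) (fun j _ => (hf j).1)
    fun j _ _ => (hf j).2

theorem exists_one_sub_pow_between {θ ℓ : ℝ} (hθ : 0 < θ) (hθ2 : θ ≤ 1 / 2) (hℓ : 0 < ℓ)
    (hℓ1 : ℓ ≤ 1) :
    ∃ k : ℕ, (1 + θ) * (1 - θ) ^ k ≤ ℓ ∧ (1 - 2 * θ) * ℓ ≤ (1 - θ) ^ k := by
  have hex : ∃ k : ℕ, (1 + θ) * (1 - θ) ^ k ≤ ℓ := by
    obtain ⟨k, hk⟩ := exists_pow_lt_of_lt_one (div_pos hℓ (by linarith : 0 < 1 + θ))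
      (by linarith : 1 - θ < 1)
    exact ⟨k, by rw [lt_div_iff₀ (by linarith)] at hk; linarith⟩
  refine ⟨Nat.find hex, Nat.find_spec hex, ?_⟩
  -- minimality of `k` gives `(1 + θ) (1 - θ)^(k - 1) > ℓ`
  rcases Nat.eq_zero_or_eq_succ_pred (Nat.find hex) with h0 | hsucc
  · rw [h0, pow_zero]
    nlinarith
  · have hprev := Nat.find_min hex (m := (Nat.find hex).pred) (by omega)
    push Not at hprev
    rw [hsucc, pow_succ]
    set q := (1 - θ) ^ (Nat.find hex).pred
    have hq : 0 ≤ q := pow_nonneg (by linarith) _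
    calc (1 - 2 * θ) * ℓ ≤ (1 - 2 * θ) * ((1 + θ) * q) := by gcongr; linarith
      _ ≤ q * (1 - θ) := by nlinarith [mul_nonneg (sq_nonneg θ) hq]

theorem nat_mul_le_neg_log_of_le_pow {θ c : ℝ} {k : ℕ} (hθ1 : θ < 1) (hc : 0 < c)
    (h : c ≤ (1 - θ) ^ k) : k * θ ≤ -Real.log c := by
  have hlog : Real.log (1 - θ) ≤ -θ := by
    linarith [Real.log_le_sub_one_of_pos (by linarith : 0 < 1 - θ)]
  have := Real.log_le_log hc h
  rw [Real.log_pow] at this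
  nlinarith [mul_le_mul_of_nonneg_left hlog k.cast_nonneg]

theorem mul_log_le_mul_log_add {x y : ℝ} (hx : 0 < x) (hy : 0 < y) :
    x * Real.log y ≤ x * Real.log x + y := by
  have := Real.log_le_sub_one_of_pos (div_pos hy hx)
  rw [Real.log_div hy.ne' hx.ne'] at this
  have := mul_le_mul_of_nonneg_left this hx.le
  have hxy : x * (y / x) = y := mul_div_cancel₀ y hx.ne'
  linarith [mul_sub x (y / x) 1, mul_sub x (Real.log y) (Real.log x)]

theorem Set.Infinite.exists_finset_superset_card_eq {α : Type*} {s : Set α} (hs : s.Infinite)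
    {t : Finset α} (ht : ↑t ⊆ s) {n : ℕ} (hn : t.card ≤ n) :
    ∃ u : Finset α, t ⊆ u ∧ ↑u ⊆ s ∧ u.card = n := by
  classical
  obtain ⟨v, hvs, hv⟩ := hs.exists_subset_card_eq n
  obtain ⟨u, htu, hu, hun⟩ :=
    Finset.exists_subsuperset_card_eq (Finset.subset_union_left (s₂ := v)) hn
      (hv.symm.le.trans (Finset.card_le_card Finset.subset_union_right))
  exact ⟨u, htu, (Finset.coe_subset.2 hu).trans (by simpa using And.intro ht hvs), hun⟩

theorem exists_forall_exists_mem_of_card_mul_pow_lt {α : Type*} [MeasurableSpace α]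
    (μ : Measure α) [IsProbabilityMeasure μ] (F : Finset (Set α)) {q : ENNReal} (n : ℕ)
    (hF : ∀ B ∈ F, μ Bᶜ ≤ q) (hcard : F.card * q ^ n < 1) :
    ∃ x : Fin n → α, ∀ B ∈ F, ∃ j, x j ∈ B := by
  by_contra! hmiss
  have hcover : (univ : Set (Fin n → α)) ⊆ ⋃ B ∈ F, univ.pi fun _ => Bᶜ := fun x _ => by
    obtain ⟨B, hB, hx⟩ := hmiss x
    exact mem_biUnion hB fun j _ => hx j
  have : (1 : ENNReal) ≤ F.card * q ^ n :=
    calc (1 : ENNReal) = Measure.pi (fun _ : Fin n => μ) univ := by simp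
      _ ≤ ∑ B ∈ F, Measure.pi (fun _ : Fin n => μ) (univ.pi fun _ => Bᶜ) :=
        (measure_mono hcover).trans (measure_biUnion_finset_le F _)
      _ = ∑ B ∈ F, μ Bᶜ ^ n := by simp [Measure.pi_pi]
      _ ≤ ∑ _B ∈ F, q ^ n := Finset.sum_le_sum fun B hB => pow_le_pow_left' (hF B hB) n
      _ = F.card * q ^ n := by simp
  exact (hcard.trans_le this).false

noncomputable def perLen (a b : ℝ) : ℝ := if a < b then b - a else 1 - (a - b)

theorem perVol_eq_prod_perLen (d : ℕ) (a b : Fin d → ℝ) :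
    perVol d a b = ∏ i, perLen (a i) (b i) := rfl

theorem perLen_mem_Icc {a b : ℝ} (ha : a ∈ Icc (0 : ℝ) 1) (hb : b ∈ Icc (0 : ℝ) 1) :
    perLen a b ∈ Icc (0 : ℝ) 1 := by
  unfold perLen
  split_ifs <;> constructor <;> linarith [ha.1, ha.2, hb.1, hb.2]

theorem perInterval_subset_Icc {a b : ℝ} (ha : a ∈ Icc (0 : ℝ) 1) (hb : b ∈ Icc (0 : ℝ) 1) :
    perInterval a b ⊆ Icc 0 1 := by
  unfold perInterval
  split_ifs
  · exact Ioo_subset_Icc_self.trans (Icc_subset_Icc ha.1 hb.2)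
  · exact sdiff_subset

theorem measurableSet_perInterval (a b : ℝ) : MeasurableSet (perInterval a b) := by
  unfold perInterval
  split_ifs
  · exact measurableSet_Ioo
  · exact measurableSet_Icc.diff measurableSet_Icc

theorem volume_perInterval {a b : ℝ} (ha : a ∈ Icc (0 : ℝ) 1) (hb : b ∈ Icc (0 : ℝ) 1) :
    volume (perInterval a b) = ENNReal.ofReal (perLen a b) := by
  unfold perInterval perLen
  split_ifs with hab
  · exact Real.volume_Ioo
  · rw [measure_sdiff (Icc_subset_Icc hb.1 ha.2) measurableSet_Icc.nullMeasurableSet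
      measure_Icc_lt_top.ne, Real.volume_Icc, Real.volume_Icc,
      ← ENNReal.ofReal_sub _ (by linarith : (0 : ℝ) ≤ a - b)]
    norm_num

noncomputable def arcEnd (x L : ℝ) : ℝ := if x + L ≤ 1 then x + L else x + L - 1

noncomputable def arc (x L : ℝ) : Set ℝ := perInterval x (arcEnd x L)

theorem arcEnd_mem_Icc {x L : ℝ} (hx : x ∈ Icc (0 : ℝ) 1) (hL : 0 < L) (hL1 : L ≤ 1) :
    arcEnd x L ∈ Icc (0 : ℝ) 1 := by
  unfold arcEnd
  split_ifs <;> constructor <;> linarith [hx.1, hx.2]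

theorem perLen_arcEnd {x L : ℝ} (hL : 0 < L) (hL1 : L ≤ 1) :
    perLen x (arcEnd x L) = L := by
  unfold perLen arcEnd
  split_ifs <;> linarith

theorem arc_subset_Icc {x L : ℝ} (hx : x ∈ Icc (0 : ℝ) 1) (hL : 0 < L) (hL1 : L ≤ 1) :
    arc x L ⊆ Icc 0 1 :=
  perInterval_subset_Icc hx (arcEnd_mem_Icc hx hL hL1)

theorem volume_arc {x L : ℝ} (hx : x ∈ Icc (0 : ℝ) 1) (hL : 0 < L) (hL1 : L ≤ 1) :
    volume (arc x L) = ENNReal.ofReal L := by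
  rw [arc, volume_perInterval hx (arcEnd_mem_Icc hx hL hL1), perLen_arcEnd hL hL1]

theorem arc_subset_perInterval {a b x L : ℝ} (ha : 0 ≤ a) (hb : b ≤ 1) (hL : 0 < L)
    (hax : a ≤ x) (hxL : x + L ≤ a + perLen a b) :
    arc x L ⊆ perInterval a b := by
  unfold arc arcEnd perInterval
  unfold perLen at hxL
  intro y hy
  split_ifs at hy hxL ⊢ <;> simp only [Set.mem_Ioo, Set.mem_sdiff, Set.mem_Icc] at hy ⊢ <;>
    grind

theorem arc_zero_subset_perInterval {a b L : ℝ} (hba : b ≤ a) (hb : b ≤ 1) (hL : 0 < L)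
    (hLb : L ≤ b) : arc 0 L ⊆ perInterval a b := by
  unfold arc arcEnd perInterval
  intro y hy
  split_ifs at hy ⊢ <;> simp only [Set.mem_Ioo, Set.mem_sdiff, Set.mem_Icc] at hy ⊢ <;> grind

theorem exists_arc_subset_perInterval {a b s L : ℝ} (ha : a ∈ Icc (0 : ℝ) 1)
    (hb : b ∈ Icc (0 : ℝ) 1) (hs : 0 < s) (hL : 0 < L) (hlen : L + s ≤ perLen a b) :
    ∃ m : ℕ, m * s ≤ 1 ∧ arc (m * s) L ⊆ perInterval a b := by
  have hceil : (⌈a / s⌉₊ : ℝ) * s < a + s := by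
    have := mul_lt_mul_of_pos_right (Nat.ceil_lt_add_one (div_nonneg ha.1 hs.le)) hs
    rwa [add_mul, div_mul_cancel₀ _ hs.ne', one_mul] at this
  by_cases hm : ⌈a / s⌉₊ * s ≤ 1
  · refine ⟨⌈a / s⌉₊, hm, arc_subset_perInterval ha.1 hb.2 hL ?_ (by linarith)⟩
    exact (div_le_iff₀ hs).1 (Nat.le_ceil _)
  · -- the grid point after `a` lies beyond `1`, so the box wraps around and contains `(0, L)`
    have hba : b ≤ a := by
      by_contra! h
      rw [perLen, if_pos h] at hlen
      linarith [hb.2]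
    rw [perLen, if_neg hba.not_gt] at hlen
    refine ⟨0, by simp, ?_⟩
    simpa only [Nat.cast_zero, zero_mul] using
      arc_zero_subset_perInterval hba hb.2 hL (by linarith)

noncomputable def unitCube (d : ℕ) : Set (Fin d → ℝ) := univ.pi fun _ => Icc 0 1

theorem volume_unitCube (d : ℕ) : volume (unitCube d) = 1 := by
  rw [unitCube, volume_pi_pi]
  simp [Real.volume_Icc]

theorem infinite_unitCube {d : ℕ} (hd : 0 < d) : (unitCube d).Infinite := by
  have : Nonempty (Fin d) := ⟨⟨0, hd⟩⟩
  refine ((Icc_infinite (zero_lt_one' ℝ)).image Function.const_injective.injOn).mono ?_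
  rintro _ ⟨t, ht, rfl⟩ i -
  exact ht

theorem perDisp_nonneg (d : ℕ) (P : Finset (Fin d → ℝ)) : 0 ≤ perDisp d P := by
  refine Real.sSup_nonneg ?_
  rintro v ⟨a, b, hab, rfl, -⟩
  exact prod_nonneg fun i _ => (perLen_mem_Icc (hab i).1 (hab i).2).1

theorem perDisp_le_of_forall_exists_mem {d : ℕ} {P : Finset (Fin d → ℝ)} {ε : ℝ} (hε : 0 ≤ ε)
    (hP : ∀ a b : Fin d → ℝ, (∀ i, a i ∈ Icc (0 : ℝ) 1 ∧ b i ∈ Icc (0 : ℝ) 1) →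
      ε < perVol d a b → ∃ x ∈ P, x ∈ univ.pi fun i => perInterval (a i) (b i)) :
    perDisp d P ≤ ε := by
  refine Real.sSup_le ?_ hε
  rintro v ⟨a, b, hab, rfl, hempty⟩
  by_contra! hv
  obtain ⟨x, hxP, hx⟩ := hP a b hab hv
  exact hempty x hxP hx

theorem perDispStar_card_le_perDisp {d : ℕ} {P : Finset (Fin d → ℝ)} (hP : ↑P ⊆ unitCube d) :
    perDispStar d P.card ≤ perDisp d P :=
  csInf_le ⟨0, by rintro v ⟨Q, -, -, rfl⟩; exact perDisp_nonneg d Q⟩ ⟨P, hP, rfl, rfl⟩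

theorem exists_finset_card_eq_forall_exists_mem {d : ℕ} (hd : 0 < d) {p : ℝ} (hp0 : 0 ≤ p)
    (hp1 : p ≤ 1) (n : ℕ) (F : Finset (Set (Fin d → ℝ)))
    (hF : ∀ B ∈ F, MeasurableSet B ∧ B ⊆ unitCube d ∧ ENNReal.ofReal p ≤ volume B)
    (hcard : F.card * (1 - p) ^ n < 1) :
    ∃ Q : Finset (Fin d → ℝ), ↑Q ⊆ unitCube d ∧ Q.card = n ∧ ∀ B ∈ F, ∃ x ∈ Q, x ∈ B := by
  classical
  have : IsProbabilityMeasure (volume.restrict (unitCube d)) :=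
    ⟨by rw [Measure.restrict_apply_univ, volume_unitCube]⟩
  have hcompl : ∀ B ∈ F, volume.restrict (unitCube d) Bᶜ ≤ ENNReal.ofReal (1 - p) := by
    intro B hB
    obtain ⟨hmeas, hsub, hvol⟩ := hF B hB
    rw [prob_compl_eq_one_sub hmeas, Measure.restrict_apply hmeas, inter_eq_left.2 hsub,
      ENNReal.ofReal_sub _ hp0, ENNReal.ofReal_one]
    exact tsub_le_tsub_left hvol 1
  have hcard' : (F.card : ENNReal) * ENNReal.ofReal (1 - p) ^ n < 1 := by
    rw [← ENNReal.ofReal_pow (by linarith), ← ENNReal.ofReal_natCast,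
      ← ENNReal.ofReal_mul (by positivity)]
    exact ENNReal.ofReal_lt_one.2 hcard
  obtain ⟨x, hx⟩ := exists_forall_exists_mem_of_card_mul_pow_lt _ F n hcompl hcard'
  -- points outside the cube are discarded, and the rest is padded to exactly `n` points
  obtain ⟨Q, hPQ, hQ, hQn⟩ := (infinite_unitCube hd).exists_finset_superset_card_eq
    (t := (Finset.univ.image x).filter (· ∈ unitCube d)) (fun y hy => (mem_filter.1 hy).2)
    (n := n) ((card_filter_le _ _).trans (card_image_le.trans (by simp)))
  refine ⟨Q, hQ, hQn, fun B hB => ?_⟩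
  obtain ⟨j, hj⟩ := hx B hB
  exact ⟨x j, hPQ (mem_filter.2 ⟨mem_image_of_mem _ (mem_univ j), (hF B hB).2.1 hj⟩), hj⟩

theorem perNinv_le_of_net {d : ℕ} (hd : 0 < d) {ε p : ℝ} (hε : 0 ≤ ε) (hp0 : 0 ≤ p)
    (hp1 : p ≤ 1) (n : ℕ) (F : Finset (Set (Fin d → ℝ)))
    (hF : ∀ B ∈ F, MeasurableSet B ∧ B ⊆ unitCube d ∧ ENNReal.ofReal p ≤ volume B)
    (hnet : ∀ a b : Fin d → ℝ, (∀ i, a i ∈ Icc (0 : ℝ) 1 ∧ b i ∈ Icc (0 : ℝ) 1) →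
      ε < perVol d a b → ∃ B ∈ F, B ⊆ univ.pi fun i => perInterval (a i) (b i))
    (hcard : F.card * (1 - p) ^ n < 1) : perNinv ε d ≤ n := by
  obtain ⟨Q, hQ, rfl, hhit⟩ := exists_finset_card_eq_forall_exists_mem hd hp0 hp1 n F hF hcard
  refine Nat.sInf_le <| (perDispStar_card_le_perDisp hQ).trans <|
    perDisp_le_of_forall_exists_mem hε fun a b hab hv => ?_
  obtain ⟨B, hB, hBsub⟩ := hnet a b hab hv
  obtain ⟨x, hxQ, hxB⟩ := hhit B hB
  exact ⟨x, hxQ, hBsub hxB⟩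

noncomputable def level (d k : ℕ) : ℝ := (1 - (4 * d : ℝ)⁻¹) ^ k

noncomputable def spacing (d k : ℕ) : ℝ := (4 * d : ℝ)⁻¹ * level d k

noncomputable def netBox (d : ℕ) (k m : Fin d → ℕ) : Set (Fin d → ℝ) :=
  univ.pi fun i => arc (m i * spacing d (k i)) (level d (k i))

noncomputable def maxLevel (d : ℕ) (ε : ℝ) : ℕ := ⌊4 * d * Real.log (2 / ε)⌋₊

noncomputable def netLevels (d : ℕ) (ε : ℝ) : Finset (Fin d → ℕ) :=
  (Fintype.piFinset fun _ => range (maxLevel d ε + 1)).filter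
    fun k => ε / 2 ≤ ∏ i, level d (k i)

open Classical in
noncomputable def net (d : ℕ) (ε : ℝ) : Finset (Set (Fin d → ℝ)) :=
  (netLevels d ε).biUnion fun k =>
    (Fintype.piFinset fun i => range (⌊(spacing d (k i))⁻¹⌋₊ + 1)).image (netBox d k)

theorem inv_four_mul_pos {d : ℕ} (hd : 0 < d) : 0 < (4 * d : ℝ)⁻¹ := by positivity

theorem inv_four_mul_le {d : ℕ} (hd : 0 < d) : (4 * d : ℝ)⁻¹ ≤ 1 / 4 := by
  rw [one_div]
  exact inv_anti₀ (by norm_num) (by linarith [(Nat.one_le_cast (α := ℝ)).2 hd])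

theorem level_pos {d : ℕ} (hd : 0 < d) (k : ℕ) : 0 < level d k :=
  pow_pos (by linarith [inv_four_mul_le hd]) k

theorem level_le_one {d : ℕ} (hd : 0 < d) (k : ℕ) : level d k ≤ 1 :=
  pow_le_one₀ (by linarith [inv_four_mul_le hd]) (by linarith [inv_four_mul_pos hd])

theorem spacing_pos {d : ℕ} (hd : 0 < d) (k : ℕ) : 0 < spacing d k :=
  mul_pos (inv_four_mul_pos hd) (level_pos hd k)

theorem mem_range_floor_inv_add_one_iff {s : ℝ} (hs : 0 < s) (m : ℕ) :
    m ∈ range (⌊s⁻¹⌋₊ + 1) ↔ m * s ≤ 1 := by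
  rw [Finset.mem_range, Nat.lt_add_one_iff, Nat.le_floor_iff (inv_nonneg.2 hs.le), ← one_div,
    le_div_iff₀ hs]

theorem grid_mem_Icc {d : ℕ} (hd : 0 < d) {k m : ℕ} (hm : m * spacing d k ≤ 1) :
    m * spacing d k ∈ Icc (0 : ℝ) 1 :=
  ⟨mul_nonneg m.cast_nonneg (spacing_pos hd k).le, hm⟩

theorem measurableSet_netBox (d : ℕ) (k m : Fin d → ℕ) : MeasurableSet (netBox d k m) :=
  MeasurableSet.univ_pi fun _ => measurableSet_perInterval _ _

theorem netBox_subset_unitCube {d : ℕ} (hd : 0 < d) {k m : Fin d → ℕ}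
    (hm : ∀ i, m i * spacing d (k i) ≤ 1) : netBox d k m ⊆ unitCube d :=
  pi_mono fun i _ => arc_subset_Icc (grid_mem_Icc hd (hm i)) (level_pos hd _) (level_le_one hd _)

theorem volume_netBox {d : ℕ} (hd : 0 < d) {k m : Fin d → ℕ}
    (hm : ∀ i, m i * spacing d (k i) ≤ 1) :
    volume (netBox d k m) = ENNReal.ofReal (∏ i, level d (k i)) := by
  rw [netBox, volume_pi_pi, ENNReal.ofReal_prod_of_nonneg fun i _ => (level_pos hd _).le]
  exact prod_congr rfl fun i _ =>
    volume_arc (grid_mem_Icc hd (hm i)) (level_pos hd _) (level_le_one hd _)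

theorem measurableSet_subset_volume_of_mem_net {d : ℕ} (hd : 0 < d) {ε : ℝ}
    {B : Set (Fin d → ℝ)} (hB : B ∈ net d ε) :
    MeasurableSet B ∧ B ⊆ unitCube d ∧ ENNReal.ofReal (ε / 2) ≤ volume B := by
  rw [net, Finset.mem_biUnion] at hB
  obtain ⟨k, hk, hB⟩ := hB
  rw [Finset.mem_image] at hB
  obtain ⟨m, hm, rfl⟩ := hB
  simp only [Fintype.mem_piFinset, mem_range_floor_inv_add_one_iff (spacing_pos hd _)] at hm
  refine ⟨measurableSet_netBox d k m, netBox_subset_unitCube hd hm, ?_⟩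
  rw [volume_netBox hd hm]
  exact ENNReal.ofReal_le_ofReal (mem_filter.1 hk).2

theorem floor_inv_spacing_add_one_le {d : ℕ} (hd : 0 < d) (k : ℕ) :
    (⌊(spacing d k)⁻¹⌋₊ : ℝ) + 1 ≤ 8 * d * (level d k)⁻¹ := by
  have hinv : (spacing d k)⁻¹ = 4 * d * (level d k)⁻¹ := by rw [spacing, mul_inv, inv_inv]
  have hd1 : (1 : ℝ) ≤ d := Nat.one_le_cast.2 hd
  have hlevel : 1 ≤ (level d k)⁻¹ := one_le_inv₀ (level_pos hd k) |>.2 (level_le_one hd k)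
  have := Nat.floor_le (inv_nonneg.2 (spacing_pos hd k).le)
  rw [hinv] at this ⊢
  nlinarith

theorem card_net_le {d : ℕ} (hd : 0 < d) {ε : ℝ} (hε : 0 < ε) :
    ((net d ε).card : ℝ) ≤ (maxLevel d ε + 1) ^ d * ((8 * d) ^ d * (2 / ε)) := by
  have hfiber : ∀ k ∈ netLevels d ε,
      ((Fintype.piFinset fun i => range (⌊(spacing d (k i))⁻¹⌋₊ + 1)).card : ℝ) ≤
        (8 * d) ^ d * (2 / ε) := by
    intro k hk
    rw [Fintype.card_piFinset]
    push_cast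
    simp only [card_range, Nat.cast_add, Nat.cast_one]
    calc ∏ i, ((⌊(spacing d (k i))⁻¹⌋₊ : ℝ) + 1) ≤ ∏ i, (8 * d * (level d (k i))⁻¹) :=
          prod_le_prod (fun i _ => by positivity) fun i _ => floor_inv_spacing_add_one_le hd _
      _ = (8 * d) ^ d * (∏ i, level d (k i))⁻¹ := by
          rw [prod_mul_distrib, prod_const, card_univ, Fintype.card_fin, prod_inv_distrib]
      _ ≤ (8 * d) ^ d * (2 / ε) := by
          rw [← inv_div]
          gcongr
          exact (mem_filter.1 hk).2
  calc ((net d ε).card : ℝ)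
      ≤ ∑ k ∈ netLevels d ε, (((Fintype.piFinset fun i =>
          range (⌊(spacing d (k i))⁻¹⌋₊ + 1)).image (netBox d k)).card : ℝ) := by
        exact_mod_cast card_biUnion_le
    _ ≤ ∑ _k ∈ netLevels d ε, (8 * d : ℝ) ^ d * (2 / ε) :=
        sum_le_sum fun k hk => (Nat.cast_le.2 card_image_le).trans (hfiber k hk)
    _ = (netLevels d ε).card * ((8 * d) ^ d * (2 / ε)) := by rw [sum_const, nsmul_eq_mul]
    _ ≤ (maxLevel d ε + 1) ^ d * ((8 * d) ^ d * (2 / ε)) := by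
        gcongr
        exact_mod_cast (card_filter_le _ _).trans_eq (by simp)

theorem le_maxLevel {d : ℕ} (hd : 0 < d) {ε : ℝ} (hε : 0 < ε) {k : ℕ}
    (hk : ε / 2 ≤ level d k) : k ≤ maxLevel d ε := by
  have := nat_mul_le_neg_log_of_le_pow (by linarith [inv_four_mul_le hd]) (by positivity) hk
  rw [← Real.log_inv, inv_div] at this
  refine Nat.le_floor ?_
  calc (k : ℝ) = k * (4 * d : ℝ)⁻¹ * (4 * d) := by field_simp
    _ ≤ Real.log (2 / ε) * (4 * d) := by gcongr
    _ = 4 * d * Real.log (2 / ε) := mul_comm _ _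

theorem half_le_one_sub_two_mul_inv_four_mul_pow {d : ℕ} (hd : 0 < d) :
    1 / 2 ≤ (1 - 2 * (4 * d : ℝ)⁻¹) ^ d := by
  have hd0 : (d : ℝ) ≠ 0 := by positivity
  have := one_add_mul_le_pow (by linarith [inv_four_mul_le hd] : (-2 : ℝ) ≤ -(2 * (4 * d : ℝ)⁻¹)) d
  calc (1 / 2 : ℝ) = 1 + d * -(2 * (4 * d : ℝ)⁻¹) := by field_simp; ring
    _ ≤ _ := this
    _ = _ := by ring

theorem exists_mem_net_subset {d : ℕ} (hd : 0 < d) {ε : ℝ} (hε : 0 < ε) {a b : Fin d → ℝ}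
    (hab : ∀ i, a i ∈ Icc (0 : ℝ) 1 ∧ b i ∈ Icc (0 : ℝ) 1) (hvol : ε < perVol d a b) :
    ∃ B ∈ net d ε, B ⊆ univ.pi fun i => perInterval (a i) (b i) := by
  set θ : ℝ := (4 * d : ℝ)⁻¹
  have hθ : 0 < θ := inv_four_mul_pos hd
  have hθ4 : θ ≤ 1 / 4 := inv_four_mul_le hd
  have hℓ : ∀ i, perLen (a i) (b i) ∈ Icc (0 : ℝ) 1 := fun i => perLen_mem_Icc (hab i).1 (hab i).2
  have hℓpos : ∀ i, 0 < perLen (a i) (b i) := fun i =>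
    hε.trans (hvol.trans_le (prod_le_apply_of_mem_Icc hℓ i))
  -- in each coordinate, the first level at which an arc plus one grid step fits
  choose k hk_fit hk_large using fun i =>
    exists_one_sub_pow_between hθ (by linarith) (hℓpos i) (hℓ i).2
  have hprod : ε / 2 ≤ ∏ i, level d (k i) :=
    calc ε / 2 ≤ (1 - 2 * θ) ^ d * perVol d a b := by
          nlinarith [half_le_one_sub_two_mul_inv_four_mul_pow hd]
      _ = ∏ i, (1 - 2 * θ) * perLen (a i) (b i) := by
          rw [perVol_eq_prod_perLen, prod_mul_distrib, prod_const, card_univ, Fintype.card_fin]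
      _ ≤ ∏ i, level d (k i) :=
          prod_le_prod (fun i _ => mul_nonneg (by linarith) (hℓ i).1) fun i _ => hk_large i
  have hk : k ∈ netLevels d ε := by
    refine mem_filter.2 ⟨Fintype.mem_piFinset.2 fun i => mem_range.2 ?_, hprod⟩
    refine Nat.lt_add_one_iff.2 (le_maxLevel hd hε (hprod.trans ?_))
    exact prod_le_apply_of_mem_Icc (fun j => ⟨(level_pos hd _).le, level_le_one hd _⟩) i
  choose m hm_grid hm_sub using fun i =>
    exists_arc_subset_perInterval (hab i).1 (hab i).2 (spacing_pos hd (k i))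
      (level_pos hd (k i)) (by simp only [spacing, level]; linarith [hk_fit i])
  refine ⟨netBox d k m, mem_biUnion.2 ⟨k, hk, mem_image_of_mem _ ?_⟩, pi_mono fun i _ => hm_sub i⟩
  exact Fintype.mem_piFinset.2 fun i =>
    (mem_range_floor_inv_add_one_iff (spacing_pos hd _) _).2 (hm_grid i)

theorem one_le_log_exp_one_div {ε : ℝ} (hε0 : 0 < ε) (hε1 : ε ≤ 1) :
    1 ≤ Real.log (Real.exp 1 / ε) := by
  rw [Real.log_div (Real.exp_ne_zero 1) hε0.ne', Real.log_exp]
  linarith [Real.log_nonpos hε0.le hε1]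

theorem log_two_div_le_log_exp_one_div {ε : ℝ} (hε0 : 0 < ε) :
    Real.log (2 / ε) ≤ Real.log (Real.exp 1 / ε) :=
  Real.log_le_log (by positivity) <| by gcongr; linarith [Real.exp_one_gt_d9]

theorem maxLevel_add_one_le {d : ℕ} (hd : 0 < d) {ε : ℝ} (hε0 : 0 < ε) (hε1 : ε ≤ 1) :
    (maxLevel d ε : ℝ) + 1 ≤ 5 * d * Real.log (Real.exp 1 / ε) := by
  have hd1 : (1 : ℝ) ≤ d := Nat.one_le_cast.2 hd
  have hℓ := one_le_log_exp_one_div hε0 hε1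
  have hlog2 := log_two_div_le_log_exp_one_div hε0
  have hK := Nat.floor_le (a := 4 * d * Real.log (2 / ε))
    (by have := Real.log_nonneg (by rw [le_div_iff₀ hε0]; linarith : (1 : ℝ) ≤ 2 / ε); positivity)
  rw [maxLevel]
  nlinarith

theorem log_netBound_le {d : ℕ} (hd : 0 < d) {ε : ℝ} (hε0 : 0 < ε) (hε1 : ε ≤ 1) :
    Real.log ((5 * d * Real.log (Real.exp 1 / ε)) ^ d * ((8 * d) ^ d * (2 / ε))) ≤
      3 * (2 * d * Real.log (2 * d) + Real.log (Real.exp 1 / ε)) := by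
  set ℓ := Real.log (Real.exp 1 / ε)
  have hd0 : (0 : ℝ) < d := Nat.cast_pos.2 hd
  have hℓ : 1 ≤ ℓ := one_le_log_exp_one_div hε0 hε1
  have hlogd : 0 ≤ Real.log d := Real.log_nonneg (Nat.one_le_cast.2 hd)
  have h40 : Real.log 40 ≤ 6 * Real.log 2 := by
    rw [show 6 * Real.log 2 = Real.log (2 ^ 6) by rw [Real.log_pow]; norm_num]
    exact Real.log_le_log (by norm_num) (by norm_num)
  have hsplit : Real.log ((5 * d * ℓ) ^ d * ((8 * d) ^ d * (2 / ε))) =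
      d * (Real.log 40 + 2 * Real.log d + Real.log ℓ) + Real.log (2 / ε) := by
    rw [← mul_assoc, ← mul_pow, show 5 * (d : ℝ) * ℓ * (8 * d) = 40 * d ^ 2 * ℓ by ring,
      Real.log_mul (by positivity) (by positivity), Real.log_pow, Real.log_mul (by positivity)
      (by positivity), Real.log_mul (by positivity) (by positivity), Real.log_pow]
    push_cast
    ring
  rw [hsplit, Real.log_mul two_ne_zero hd0.ne']
  nlinarith [mul_log_le_mul_log_add hd0 (by linarith : 0 < ℓ), log_two_div_le_log_exp_one_div hε0,
    mul_le_mul_of_nonneg_left h40 hd0.le, mul_nonneg hd0.le hlogd]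

theorem one_le_mul_log_add_log_exp_one_div {d : ℕ} (hd : 0 < d) {ε : ℝ} (hε0 : 0 < ε)
    (hε1 : ε ≤ 1) : 1 ≤ 2 * d * Real.log (2 * d) + Real.log (Real.exp 1 / ε) := by
  have hlog := Real.log_nonneg (by linarith [Nat.one_le_cast (α := ℝ) |>.2 hd] : (1 : ℝ) ≤ 2 * d)
  linarith [mul_nonneg (by positivity : (0 : ℝ) ≤ 2 * d) hlog, one_le_log_exp_one_div hε0 hε1]

theorem netBound_mul_pow_lt_one {d : ℕ} (hd : 0 < d) {ε : ℝ} (hε0 : 0 < ε) (hε1 : ε ≤ 1) :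
    (5 * d * Real.log (Real.exp 1 / ε)) ^ d * ((8 * d) ^ d * (2 / ε)) * (1 - ε / 2) ^
      ⌊24 * Real.exp 1 * (2 * d * Real.log (2 * d) + Real.log (Real.exp 1 / ε)) / ε⌋₊ < 1 := by
  set X := 2 * d * Real.log (2 * d) + Real.log (Real.exp 1 / ε)
  set n := ⌊24 * Real.exp 1 * X / ε⌋₊
  set C := (5 * d * Real.log (Real.exp 1 / ε)) ^ d * ((8 * d) ^ d * (2 / ε))
  have hX : 1 ≤ X := one_le_mul_log_add_log_exp_one_div hd hε0 hε1
  have hC : 0 < C := by have := one_le_log_exp_one_div hε0 hε1; positivity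
  -- `n ε / 2 > 12 e X - ε / 2`, which beats `log C ≤ 3 X` with room to spare
  have hn : 3 * X < n * (ε / 2) := by
    have := (div_lt_iff₀ hε0).1 (Nat.lt_floor_add_one (24 * Real.exp 1 * X / ε))
    nlinarith [mul_le_mul_of_nonneg_right Real.exp_one_gt_d9.le (by linarith : 0 ≤ X)]
  have hCexp : C ≤ Real.exp (3 * X) := by
    rw [← Real.exp_log hC]
    exact Real.exp_le_exp.2 (log_netBound_le hd hε0 hε1)
  have hpow : (1 - ε / 2) ^ n ≤ Real.exp (-(n * (ε / 2))) := by
    rw [← mul_neg, Real.exp_nat_mul]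
    exact pow_le_pow_left₀ (by linarith) (Real.one_sub_le_exp_neg _) n
  calc C * (1 - ε / 2) ^ n ≤ Real.exp (3 * X) * Real.exp (-(n * (ε / 2))) :=
        mul_le_mul hCexp hpow (pow_nonneg (by linarith) n) (Real.exp_pos _).le
    _ < 1 := by
        rw [← Real.exp_add, Real.exp_lt_one_iff]
        linarith

/-- Periodic main theorem: `Ñ(ε,d) ≤ 24e (2 d ln(2d) + ln(e/ε)) / ε`
for `d ≥ 2` and `0 < ε ≤ 1/2`. -/
theorem stmt_18 (d : ℕ) (hd : 2 ≤ d) (ε : ℝ) (hε : ε ∈ Set.Ioc (0:ℝ) (1/2)) :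
    (perNinv ε d : ℝ) ≤
      24 * Real.exp 1 * (2 * d * Real.log (2 * d) + Real.log (Real.exp 1 / ε)) / ε := by
  obtain ⟨hε0, hε2⟩ := hε
  have hd0 : 0 < d := by omega
  have hε1 : ε ≤ 1 := by linarith
  have hnet := perNinv_le_of_net hd0 hε0.le (p := ε / 2) (by positivity) (by linarith)
    ⌊24 * Real.exp 1 * (2 * d * Real.log (2 * d) + Real.log (Real.exp 1 / ε)) / ε⌋₊ (net d ε)
    (fun B hB => measurableSet_subset_volume_of_mem_net hd0 hB)
    (fun a b hab hv => exists_mem_net_subset hd0 hε0 hab hv) <| by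
      refine lt_of_le_of_lt ?_ (netBound_mul_pow_lt_one hd0 hε0 hε1)
      gcongr
      · exact pow_nonneg (by linarith) _
      · exact (card_net_le hd0 hε0).trans (by gcongr; exact maxLevel_add_one_le hd0 hε0 hε1)
  have := one_le_mul_log_add_log_exp_one_div hd0 hε0 hε1
  exact (Nat.cast_le.2 hnet).trans (Nat.floor_le (by positivity))
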